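/- If {k_λ}_{λ∈Λ} is a complete system in the Fock space F, then the upper density D₊(Λ) = limsup_{r→∞} #(Λ ∩ B(0,r))/(πr²) satisfies D₊(Λ) ≥ 1/(3π). -/

import Mathlib

def MemFock (F : ℂ → ℂ) : Prop :=
  Differentiable ℂ F ∧
    MeasureTheory.Integrable
      (fun z : ℂ => ‖F z‖ ^ 2 * Real.exp (-Real.pi * ‖z‖ ^ 2))

/-!
If `D₊(Λ) < 1/(3π)`, then `#(Λ ∩ B(0, s)) ≤ s²/3` for all large `s`. Let `P` be the polynomial
vanishing at the finitely many points of `Λ` in a disc `B(0, R₀)` and `T(z) = ∏ (1 - z³/λ³)` the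
product over the remaining points. Writing `log (1 + r³/t³) ≤ ∫ₜ^∞ W r` for an explicit
majorant `W r` of its derivative and summing over `λ` bounds `∑ log (1 + r³/|λ|³)` by
`∫ n(s) W r s ds`, where `n(s) ≤ s²/3` is the counting function of `Λ`; this gives
`log |T z| ≤ (3/2) |z|² + O(1)`. As `3 < π`, `P T` is then a nonzero function in the Fock space
vanishing on `Λ`.
-/

open MeasureTheory Filter Set Real Topology
open scoped Finset

lemma lintegral_Ioi_div_pow {C t : ℝ} (hC : 0 ≤ C) (ht : 0 < t) (n : ℕ) :
    ∫⁻ s in Ioi t, ENNReal.ofReal (C / s ^ (n + 2)) =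
      ENNReal.ofReal (C / ((n + 1) * t ^ (n + 1))) := by
  have hrpow : EqOn (fun s : ℝ ↦ C * s ^ (-(n + 2 : ℝ))) (fun s ↦ C / s ^ (n + 2)) (Ioi t) :=
    fun s hs ↦ by
      dsimp only
      rw [rpow_neg (ht.trans hs).le, show (n + 2 : ℝ) = ((n + 2 : ℕ) : ℝ) by push_cast; ring,
        rpow_natCast, div_eq_mul_inv]
  have hint : IntegrableOn (fun s : ℝ ↦ C / s ^ (n + 2)) (Ioi t) :=
    IntegrableOn.congr_fun ((integrableOn_Ioi_rpow_of_lt (by linarith) ht).const_mul C) hrpow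
      measurableSet_Ioi
  rw [← ofReal_integral_eq_lintegral_ofReal hint
    ((ae_restrict_mem measurableSet_Ioi).mono fun s hs ↦ by have := ht.trans hs; positivity),
    ← setIntegral_congr_fun measurableSet_Ioi hrpow, integral_const_mul,
    integral_Ioi_rpow_of_lt (by linarith) ht, show -(n + 2 : ℝ) + 1 = -(n + 1 : ℝ) by ring,
    rpow_neg ht.le, show (n + 1 : ℝ) = ((n + 1 : ℕ) : ℝ) by push_cast; ring, rpow_natCast]
  congr 1
  push_cast
  field_simp

lemma lintegral_Ioo_div {C t r : ℝ} (hC : 0 ≤ C) (ht : 0 < t) (htr : t ≤ r) :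
    ∫⁻ s in Ioo t r, ENNReal.ofReal (C / s) = ENNReal.ofReal (C * log (r / t)) := by
  have hint : IntegrableOn (fun s : ℝ ↦ C / s) (Ioo t r) := by
    refine (ContinuousOn.integrableOn_Icc ?_).mono_set Ioo_subset_Icc_self
    exact continuousOn_const.div continuousOn_id fun s hs ↦ (ht.trans_le hs.1).ne'
  rw [← ofReal_integral_eq_lintegral_ofReal hint
    ((ae_restrict_mem measurableSet_Ioo).mono fun s hs ↦ by have := ht.trans hs.1; positivity),
    ← integral_Ioc_eq_integral_Ioo, ← intervalIntegral.integral_of_le htr]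
  simp only [div_eq_mul_inv, intervalIntegral.integral_const_mul,
    integral_inv_of_pos ht (ht.trans_le htr)]

lemma lintegral_Ioo_mul_self {C t r : ℝ} (hC : 0 ≤ C) (ht : 0 ≤ t) (htr : t ≤ r) :
    ∫⁻ s in Ioo t r, ENNReal.ofReal (C * s) = ENNReal.ofReal (C * ((r ^ 2 - t ^ 2) / 2)) := by
  have hint : IntegrableOn (fun s : ℝ ↦ C * s) (Ioo t r) :=
    (continuous_const.mul continuous_id).integrableOn_Icc.mono_set Ioo_subset_Icc_self
  rw [← ofReal_integral_eq_lintegral_ofReal hint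
    ((ae_restrict_mem measurableSet_Ioo).mono fun s hs ↦ by have := ht.trans hs.1.le; positivity),
    ← integral_Ioc_eq_integral_Ioo, ← intervalIntegral.integral_of_le htr,
    intervalIntegral.integral_const_mul, integral_id]

-- majorizes `-d/ds log (1 + r³/s³) = 3r³ / (s (s³ + r³))`
noncomputable def logMajorant (r s : ℝ) : ℝ := if s < r then 3 / s else 3 * r ^ 3 / s ^ 4

lemma measurable_logMajorant (r : ℝ) : Measurable (logMajorant r) :=
  Measurable.ite (measurableSet_lt measurable_id measurable_const) (by fun_prop) (by fun_prop)

lemma lintegral_Ioi_logMajorant_of_le {r t : ℝ} (hr : 0 ≤ r) (ht : 0 < t) (hrt : r ≤ t) :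
    ∫⁻ s in Ioi t, ENNReal.ofReal (logMajorant r s) = ENNReal.ofReal (r ^ 3 / t ^ 3) := by
  rw [setLIntegral_congr_fun measurableSet_Ioi fun s hs ↦ by
    rw [logMajorant, if_neg (hrt.trans hs.le).not_gt]]
  rw [lintegral_Ioi_div_pow (by positivity) ht 2]
  congr 1
  field_simp
  ring

lemma lintegral_Ioi_logMajorant_of_lt {r t : ℝ} (ht : 0 < t) (htr : t < r) :
    ∫⁻ s in Ioi t, ENNReal.ofReal (logMajorant r s) = ENNReal.ofReal (3 * log (r / t) + 1) := by
  have hr : 0 < r := ht.trans htr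
  rw [← Ioo_union_Ici_eq_Ioi htr, lintegral_union measurableSet_Ici
      ((Iio_disjoint_Ici le_rfl).mono_left Ioo_subset_Iio_self),
    setLIntegral_congr Ioi_ae_eq_Ici.symm, lintegral_Ioi_logMajorant_of_le hr.le hr le_rfl,
    div_self (by positivity), setLIntegral_congr_fun measurableSet_Ioo fun s hs ↦ by
      rw [logMajorant, if_pos hs.2], lintegral_Ioo_div (by norm_num) ht htr.le,
    ← ENNReal.ofReal_add (by have := log_nonneg ((one_le_div ht).2 htr.le); positivity)
      zero_le_one]

lemma log_one_add_le_lintegral_logMajorant {r t : ℝ} (hr : 0 < r) (ht : 0 < t) :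
    ENNReal.ofReal (log (1 + r ^ 3 / t ^ 3)) ≤ ∫⁻ s in Ioi t, ENNReal.ofReal (logMajorant r s) := by
  rcases le_or_gt r t with hrt | htr
  · rw [lintegral_Ioi_logMajorant_of_le hr.le ht hrt]
    exact ENNReal.ofReal_le_ofReal
      (by linarith [log_le_sub_one_of_pos (by positivity : 0 < 1 + r ^ 3 / t ^ 3)])
  · rw [lintegral_Ioi_logMajorant_of_lt ht htr]
    refine ENNReal.ofReal_le_ofReal ?_
    have hx : 1 ≤ (r / t) ^ 3 := one_le_pow₀ ((one_le_div ht).2 htr.le)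
    calc log (1 + r ^ 3 / t ^ 3) ≤ log (2 * (r / t) ^ 3) :=
          log_le_log (by positivity) (by rw [div_pow] at hx ⊢; linarith)
      _ = log 2 + 3 * log (r / t) := by
          rw [log_mul two_ne_zero (by positivity), log_pow]; push_cast; ring
      _ ≤ 3 * log (r / t) + 1 := by linarith [log_two_lt_d9]

lemma lintegral_Ioi_sq_mul_logMajorant_le {c R₀ r : ℝ} (hc : 0 ≤ c) (hR₀ : 0 < R₀) (hr : R₀ ≤ r) :
    ∫⁻ s in Ioi R₀, ENNReal.ofReal (c * s ^ 2) * ENNReal.ofReal (logMajorant r s) ≤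
      ENNReal.ofReal (9 / 2 * c * r ^ 2) := by
  have hr0 : 0 < r := hR₀.trans_le hr
  have hnear : ∫⁻ s in Ioo R₀ r, ENNReal.ofReal (c * s ^ 2) * ENNReal.ofReal (logMajorant r s) =
      ENNReal.ofReal (3 * c * ((r ^ 2 - R₀ ^ 2) / 2)) := by
    rw [← lintegral_Ioo_mul_self (by positivity) hR₀.le hr]
    refine setLIntegral_congr_fun measurableSet_Ioo fun s hs ↦ ?_
    have hs0 : 0 < s := hR₀.trans hs.1
    rw [logMajorant, if_pos hs.2, ← ENNReal.ofReal_mul (by positivity)]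
    congr 1
    field_simp
  have hfar : ∫⁻ s in Ici r, ENNReal.ofReal (c * s ^ 2) * ENNReal.ofReal (logMajorant r s) =
      ENNReal.ofReal (3 * c * r ^ 2) := by
    rw [← setLIntegral_congr Ioi_ae_eq_Ici]
    have := lintegral_Ioi_div_pow (C := 3 * c * r ^ 3) (by positivity) hr0 0
    rw [show 3 * c * r ^ 2 = 3 * c * r ^ 3 / ((((0 : ℕ) : ℝ) + 1) * r ^ (0 + 1)) by
      field_simp; ring, ← this]
    refine setLIntegral_congr_fun measurableSet_Ioi fun s hs ↦ ?_
    have hs0 : 0 < s := hr0.trans hs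
    rw [logMajorant, if_neg hs.le.not_gt, ← ENNReal.ofReal_mul (by positivity)]
    congr 1
    field_simp
  calc ∫⁻ s in Ioi R₀, ENNReal.ofReal (c * s ^ 2) * ENNReal.ofReal (logMajorant r s)
      ≤ ENNReal.ofReal (3 * c * ((r ^ 2 - R₀ ^ 2) / 2)) + ENNReal.ofReal (3 * c * r ^ 2) := by
        rw [← hnear, ← hfar]
        exact (lintegral_mono_set Ioi_subset_Ioo_union_Ici).trans (lintegral_union_le _ _ _)
    _ ≤ ENNReal.ofReal (9 / 2 * c * r ^ 2) := by
        have := pow_le_pow_left₀ hR₀.le hr 2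
        rw [← ENNReal.ofReal_add (by nlinarith) (by positivity)]
        exact ENNReal.ofReal_le_ofReal (by nlinarith)

lemma sum_lintegral_Ioi_eq_lintegral_card_mul {ι : Type*} (S : Finset ι) (ρ : ι → ℝ)
    {f : ℝ → ENNReal} (hf : Measurable f) :
    ∑ i ∈ S, ∫⁻ s in Ioi (ρ i), f s = ∫⁻ s, #{i ∈ S | ρ i < s} * f s := by
  simp_rw [← lintegral_indicator measurableSet_Ioi]
  rw [← lintegral_finsetSum _ fun i _ ↦ hf.indicator measurableSet_Ioi]
  congr 1 with s
  simp only [indicator, mem_Ioi]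
  rw [← Finset.sum_filter, Finset.sum_const, nsmul_eq_mul]

theorem sum_log_one_add_le {ι : Type*} (S : Finset ι) (ρ : ι → ℝ) {c R₀ r : ℝ} (hR₀ : 0 < R₀)
    (hr : R₀ ≤ r) (hρ : ∀ i ∈ S, R₀ ≤ ρ i)
    (hcount : ∀ s, R₀ ≤ s → (#{i ∈ S | ρ i < s} : ℝ) ≤ c * s ^ 2) :
    ∑ i ∈ S, log (1 + r ^ 3 / ρ i ^ 3) ≤ 9 / 2 * c * r ^ 2 := by
  have hc : 0 ≤ c := nonneg_of_mul_nonneg_left ((Nat.cast_nonneg _).trans (hcount R₀ le_rfl))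
    (by positivity)
  have hr0 : 0 < r := hR₀.trans_le hr
  have hcard : ∀ s, (#{i ∈ S | ρ i < s} : ENNReal) * ENNReal.ofReal (logMajorant r s) ≤
      (Ioi R₀).indicator
        (fun s ↦ ENNReal.ofReal (c * s ^ 2) * ENNReal.ofReal (logMajorant r s)) s := by
    intro s
    by_cases hs : R₀ < s
    · rw [indicator_of_mem (mem_Ioi.2 hs), ← ENNReal.ofReal_natCast]
      gcongr
      exact hcount s hs.le
    · have hempty : {i ∈ S | ρ i < s} = ∅ :=
        Finset.filter_false_of_mem fun i hi ↦ not_lt.2 ((not_lt.1 hs).trans (hρ i hi))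
      simp [hempty]
  have hlog_nonneg : ∀ i ∈ S, 0 ≤ log (1 + r ^ 3 / ρ i ^ 3) := fun i hi ↦ by
    have := hR₀.trans_le (hρ i hi)
    exact log_nonneg (by linarith [show 0 ≤ r ^ 3 / ρ i ^ 3 by positivity])
  rw [← ENNReal.ofReal_le_ofReal_iff (by positivity), ENNReal.ofReal_sum_of_nonneg hlog_nonneg]
  calc ∑ i ∈ S, ENNReal.ofReal (log (1 + r ^ 3 / ρ i ^ 3))
      ≤ ∑ i ∈ S, ∫⁻ s in Ioi (ρ i), ENNReal.ofReal (logMajorant r s) :=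
        Finset.sum_le_sum fun i hi ↦
          log_one_add_le_lintegral_logMajorant hr0 (hR₀.trans_le (hρ i hi))
    _ = ∫⁻ s, #{i ∈ S | ρ i < s} * ENNReal.ofReal (logMajorant r s) :=
        sum_lintegral_Ioi_eq_lintegral_card_mul S ρ (measurable_logMajorant r).ennreal_ofReal
    _ ≤ ∫⁻ s in Ioi R₀, ENNReal.ofReal (c * s ^ 2) * ENNReal.ofReal (logMajorant r s) := by
        rw [← lintegral_indicator measurableSet_Ioi]
        exact lintegral_mono hcard
    _ ≤ ENNReal.ofReal (9 / 2 * c * r ^ 2) := lintegral_Ioi_sq_mul_logMajorant_le hc hR₀ hr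

lemma summable_inv_pow_three_of_sum_log_le {ι : Type*} {ρ : ι → ℝ} {R₀ M : ℝ} (hR₀ : 0 < R₀)
    (hρ : ∀ i, R₀ ≤ ρ i) (hM : ∀ S : Finset ι, ∑ i ∈ S, log (1 + R₀ ^ 3 / ρ i ^ 3) ≤ M) :
    Summable fun i ↦ (ρ i ^ 3)⁻¹ := by
  have hterm : ∀ i, (ρ i ^ 3)⁻¹ ≤ 2 / R₀ ^ 3 * log (1 + R₀ ^ 3 / ρ i ^ 3) := fun i ↦ by
    have hρ0 : 0 < ρ i := hR₀.trans_le (hρ i)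
    set x := R₀ ^ 3 / ρ i ^ 3
    have hx0 : 0 ≤ x := by positivity
    have hx1 : x ≤ 1 := div_le_one_of_le₀ (pow_le_pow_left₀ hR₀.le (hρ i) 3) (by positivity)
    have hx : x / 2 ≤ log (1 + x) := by
      have := one_sub_inv_le_log_of_pos (show 0 < 1 + x by positivity)
      have : x / 2 ≤ 1 - (1 + x)⁻¹ := by
        rw [inv_eq_one_div, le_sub_iff_add_le, ← le_sub_iff_add_le', div_le_iff₀ (by positivity)]
        nlinarith [mul_nonneg hx0 (sub_nonneg.2 hx1)]
      linarith
    calc (ρ i ^ 3)⁻¹ = 2 / R₀ ^ 3 * (x / 2) := by simp only [x]; field_simp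
      _ ≤ 2 / R₀ ^ 3 * log (1 + x) := by gcongr
  refine summable_of_sum_le (c := 2 / R₀ ^ 3 * M)
    (fun i ↦ by have := hR₀.trans_le (hρ i); positivity) fun S ↦ ?_
  calc ∑ i ∈ S, (ρ i ^ 3)⁻¹ ≤ ∑ i ∈ S, 2 / R₀ ^ 3 * log (1 + R₀ ^ 3 / ρ i ^ 3) :=
        Finset.sum_le_sum fun i _ ↦ hterm i
    _ ≤ 2 / R₀ ^ 3 * M := by rw [← Finset.mul_sum]; gcongr; exact hM S

noncomputable def cubeProduct (A : Set ℂ) (z : ℂ) : ℂ := ∏' a : A, (1 - z ^ 3 / (a : ℂ) ^ 3)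

section CubeProduct

variable {A : Set ℂ}

lemma hasProdUniformlyOn_cubeProduct (hA : Summable fun a : A ↦ (‖(a : ℂ)‖ ^ 3)⁻¹) (R : ℝ) :
    HasProdUniformlyOn (fun (a : A) z ↦ 1 - z ^ 3 / (a : ℂ) ^ 3) (cubeProduct A)
      (Metric.closedBall 0 R) := by
  have hbound : ∀ᶠ a : A in cofinite, ∀ z ∈ Metric.closedBall (0 : ℂ) R,
      ‖-(z ^ 3 / (a : ℂ) ^ 3)‖ ≤ R ^ 3 * (‖(a : ℂ)‖ ^ 3)⁻¹ :=
    .of_forall fun a z hz ↦ by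
      rw [norm_neg, norm_div, norm_pow, norm_pow, div_eq_mul_inv]
      gcongr
      exact mem_closedBall_zero_iff.1 hz
  have := (hA.mul_left (R ^ 3)).hasProdUniformlyOn_one_add (isCompact_closedBall 0 R) hbound
    fun _ ↦ by fun_prop
  simp only [← sub_eq_add_neg] at this
  exact this

lemma differentiable_cubeProduct (hA : Summable fun a : A ↦ (‖(a : ℂ)‖ ^ 3)⁻¹) :
    Differentiable ℂ (cubeProduct A) := by
  intro z
  have hz : z ∈ Metric.ball (0 : ℂ) (‖z‖ + 1) := by rw [mem_ball_zero_iff]; linarith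
  refine (((hasProdUniformlyOn_cubeProduct hA _).mono Metric.ball_subset_closedBall
    ).hasProdLocallyUniformlyOn.differentiableOn (.of_forall fun S ↦ ?_)
    Metric.isOpen_ball).differentiableAt (Metric.isOpen_ball.mem_nhds hz)
  simpa [Finset.prod_fn] using DifferentiableOn.finsetProd fun _ _ ↦ by fun_prop

@[simp]
lemma cubeProduct_zero : cubeProduct A 0 = 1 := by simp [cubeProduct]

lemma cubeProduct_eq_zero {a : ℂ} (ha : a ∈ A) (ha0 : a ≠ 0) : cubeProduct A a = 0 :=
  tprod_of_exists_eq_zero ⟨⟨a, ha⟩, by simp [ha0]⟩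

lemma norm_cubeProduct_le (hA : Summable fun a : A ↦ (‖(a : ℂ)‖ ^ 3)⁻¹) {z : ℂ} {r M : ℝ}
    (hz : ‖z‖ ≤ r) (hM : ∀ S : Finset A, ∑ a ∈ S, log (1 + r ^ 3 / ‖(a : ℂ)‖ ^ 3) ≤ M) :
    ‖cubeProduct A z‖ ≤ exp M := by
  have hprod := (hasProdUniformlyOn_cubeProduct hA r).hasProd (mem_closedBall_zero_iff.2 hz)
  refine le_of_tendsto' hprod.norm fun S ↦ ?_
  have hr : 0 ≤ r := (norm_nonneg z).trans hz
  calc ∏ a ∈ S, ‖1 - z ^ 3 / (a : ℂ) ^ 3‖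
      ≤ ∏ a ∈ S, exp (log (1 + r ^ 3 / ‖(a : ℂ)‖ ^ 3)) := by
        refine Finset.prod_le_prod (fun _ _ ↦ norm_nonneg _) fun a _ ↦ ?_
        rw [exp_log (by positivity)]
        calc ‖1 - z ^ 3 / (a : ℂ) ^ 3‖ ≤ 1 + ‖z‖ ^ 3 / ‖(a : ℂ)‖ ^ 3 :=
              (norm_sub_le _ _).trans_eq (by rw [norm_one, norm_div, norm_pow, norm_pow])
          _ ≤ 1 + r ^ 3 / ‖(a : ℂ)‖ ^ 3 := by gcongr
    _ ≤ exp M := by rw [← exp_sum]; exact exp_le_exp.2 (hM S)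

end CubeProduct

section Counting

variable {A : Set ℂ} {c R₀ : ℝ}

lemma summable_inv_norm_pow_three_of_card_le (hR₀ : 0 < R₀) (hA : ∀ a ∈ A, R₀ ≤ ‖a‖)
    (hcount : ∀ s, R₀ ≤ s → ∀ S : Finset A, (#{a ∈ S | ‖a.1‖ < s} : ℝ) ≤ c * s ^ 2) :
    Summable fun a : A ↦ (‖(a : ℂ)‖ ^ 3)⁻¹ :=
  summable_inv_pow_three_of_sum_log_le hR₀ (fun a ↦ hA a a.2) fun S ↦
    sum_log_one_add_le S _ hR₀ le_rfl (fun a _ ↦ hA a a.2) fun s hs ↦ hcount s hs S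

lemma norm_cubeProduct_le_of_card_le (hR₀ : 0 < R₀) (hA : ∀ a ∈ A, R₀ ≤ ‖a‖)
    (hcount : ∀ s, R₀ ≤ s → ∀ S : Finset A, (#{a ∈ S | ‖a.1‖ < s} : ℝ) ≤ c * s ^ 2)
    (z : ℂ) : ‖cubeProduct A z‖ ≤ exp (9 / 2 * c * ‖z‖ ^ 2) * exp (9 / 2 * c * R₀ ^ 2) := by
  have hc : 0 ≤ c := by
    have := hcount R₀ le_rfl ∅
    rw [Finset.filter_empty, Finset.card_empty, Nat.cast_zero] at this
    exact nonneg_of_mul_nonneg_left this (by positivity)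
  set r := max ‖z‖ R₀
  have hr : r ^ 2 ≤ ‖z‖ ^ 2 + R₀ ^ 2 := by
    rcases max_cases ‖z‖ R₀ with ⟨h, _⟩ | ⟨h, _⟩ <;> simp only [r, h] <;> nlinarith
  calc ‖cubeProduct A z‖ ≤ exp (9 / 2 * c * r ^ 2) :=
        norm_cubeProduct_le (summable_inv_norm_pow_three_of_card_le hR₀ hA hcount)
          (le_max_left _ _) fun S ↦ sum_log_one_add_le S _ hR₀ (le_max_right _ _)
            (fun a _ ↦ hA a a.2) fun s hs ↦ hcount s hs S
    _ ≤ exp (9 / 2 * c * ‖z‖ ^ 2) * exp (9 / 2 * c * R₀ ^ 2) := by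
        rw [← exp_add, ← mul_add]
        gcongr

end Counting

lemma integrable_exp_neg_mul_sq_norm {V : Type*} [NormedAddCommGroup V] [InnerProductSpace ℝ V]
    [FiniteDimensional ℝ V] [MeasurableSpace V] [BorelSpace V] {b : ℝ} (hb : 0 < b) :
    Integrable fun v : V ↦ exp (-b * ‖v‖ ^ 2) := by
  refine (GaussianFourier.integrable_cexp_neg_mul_sq_norm_add (V := V) (b := b)
    (by simpa using hb) 0 0).norm.congr (.of_forall fun v ↦ ?_)
  simp only [zero_mul, add_zero, Complex.norm_exp]
  norm_cast

lemma memFock_of_norm_le {G : ℂ → ℂ} (hG : Differentiable ℂ G) {C a b : ℝ} (ha : 2 * a < π)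
    (hbound : ∀ z, ‖G z‖ ≤ C * exp (b * ‖z‖ + a * ‖z‖ ^ 2)) : MemFock G := by
  set δ := π - 2 * a
  have hδ : 0 < δ := by simp only [δ]; linarith
  refine ⟨hG, ((integrable_exp_neg_mul_sq_norm (V := ℂ) (half_pos hδ)).const_mul
    (C ^ 2 * exp (2 * b ^ 2 / δ))).mono'
    (by have := hG.continuous; fun_prop) (.of_forall fun z ↦ ?_)⟩
  set x := ‖z‖
  have hsq : 2 * b * x ≤ δ / 2 * x ^ 2 + 2 * b ^ 2 / δ := by
    have : δ / 2 * x ^ 2 + 2 * b ^ 2 / δ - 2 * b * x = δ / 2 * (x - 2 * b / δ) ^ 2 := by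
      field_simp; ring
    nlinarith [sq_nonneg (x - 2 * b / δ)]
  rw [Real.norm_of_nonneg (by positivity)]
  calc ‖G z‖ ^ 2 * exp (-π * x ^ 2)
      ≤ (C * exp (b * x + a * x ^ 2)) ^ 2 * exp (-π * x ^ 2) := by
        gcongr
        exact hbound z
    _ = C ^ 2 * exp (2 * b * x - δ * x ^ 2) := by
        rw [mul_pow, ← exp_nat_mul, mul_assoc, ← exp_add]
        congr 2
        simp only [δ]
        push_cast
        ring
    _ ≤ C ^ 2 * exp (2 * b ^ 2 / δ) * exp (-(δ / 2) * x ^ 2) := by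
        rw [mul_assoc (C ^ 2), ← exp_add]
        gcongr
        linarith

lemma norm_prod_sub_le (s : Finset ℂ) (z : ℂ) :
    ‖∏ w ∈ s, (z - w)‖ ≤ (∏ w ∈ s, (1 + ‖w‖)) * exp (#s * ‖z‖) := by
  rw [norm_prod, exp_nat_mul, ← Finset.prod_const, ← Finset.prod_mul_distrib]
  refine Finset.prod_le_prod (fun _ _ ↦ norm_nonneg _) fun w _ ↦ ?_
  calc ‖z - w‖ ≤ ‖z‖ + ‖w‖ := norm_sub_le z w
    _ ≤ (1 + ‖w‖) * (1 + ‖z‖) := by nlinarith [norm_nonneg z, norm_nonneg w]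
    _ ≤ (1 + ‖w‖) * exp ‖z‖ := by gcongr; linarith [add_one_le_exp ‖z‖]

theorem exists_memFock_ne_zero_of_ncard_le {Λ : Set ℂ}
    (hfin : ∀ r : ℝ, (Λ ∩ Metric.ball 0 r).Finite) {c R₀ : ℝ} (hc : 9 * c < π) (hR₀ : 0 < R₀)
    (hcount : ∀ s, R₀ ≤ s → ((Λ ∩ Metric.ball 0 s).ncard : ℝ) ≤ c * s ^ 2) :
    ∃ G : ℂ → ℂ, MemFock G ∧ (∀ l ∈ Λ, G l = 0) ∧ G ≠ 0 := by
  set A := Λ \ Metric.ball 0 R₀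
  set near := (hfin R₀).toFinset
  have hA : ∀ a ∈ A, R₀ ≤ ‖a‖ := fun a ha ↦ not_lt.1 fun h ↦ ha.2 (mem_ball_zero_iff.2 h)
  have hcountA : ∀ s, R₀ ≤ s → ∀ S : Finset A, (#{a ∈ S | ‖a.1‖ < s} : ℝ) ≤ c * s ^ 2 := by
    intro s hs S
    refine le_trans ?_ (hcount s hs)
    rw [← Finset.card_map (Function.Embedding.subtype _), ← Set.ncard_coe_finset]
    gcongr
    · exact hfin s
    · intro x hx
      obtain ⟨a, ha, rfl⟩ := Finset.mem_map.1 hx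
      exact ⟨a.2.1, mem_ball_zero_iff.2 (Finset.mem_filter.1 ha).2⟩
  have hsum := summable_inv_norm_pow_three_of_card_le hR₀ hA hcountA
  set G : ℂ → ℂ := fun z ↦ (∏ w ∈ near, (z - w)) * cubeProduct A z
  have hG : Differentiable ℂ G := by
    have := differentiable_cubeProduct hsum
    fun_prop
  have hbound : ∀ z, ‖G z‖ ≤ (∏ w ∈ near, (1 + ‖w‖)) * exp (9 / 2 * c * R₀ ^ 2) *
      exp (#near * ‖z‖ + 9 / 2 * c * ‖z‖ ^ 2) := fun z ↦ calc
    ‖G z‖ ≤ (∏ w ∈ near, (1 + ‖w‖)) * exp (#near * ‖z‖) *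
        (exp (9 / 2 * c * ‖z‖ ^ 2) * exp (9 / 2 * c * R₀ ^ 2)) := by
      rw [norm_mul]
      gcongr
      · exact norm_prod_sub_le near z
      · exact norm_cubeProduct_le_of_card_le hR₀ hA hcountA z
    _ = _ := by rw [exp_add]; ring
  refine ⟨G, memFock_of_norm_le hG (by linarith) hbound, fun l hl ↦ ?_, ?_⟩
  · by_cases hl0 : l ∈ Metric.ball 0 R₀
    · exact mul_eq_zero_of_left (Finset.prod_eq_zero ((hfin R₀).mem_toFinset.2 ⟨hl, hl0⟩)
        (sub_self l)) _
    · refine mul_eq_zero_of_right _ (cubeProduct_eq_zero ⟨hl, hl0⟩ ?_)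
      rintro rfl
      exact hl0 (Metric.mem_ball_self hR₀)
  · have hT : ∀ᶠ z in 𝓝[≠] (0 : ℂ), cubeProduct A z ≠ 0 :=
      nhdsWithin_le_nhds <|
        (differentiable_cubeProduct hsum).continuous.continuousAt.eventually_ne (by simp)
    have hP : ∀ᶠ z in 𝓝[≠] (0 : ℂ), z ∉ near :=
      nhdsNE_le_cofinite 0 near.finite_toSet.compl_mem_cofinite
    obtain ⟨z, hTz, hPz⟩ := (hT.and hP).exists
    refine fun hG0 ↦ mul_ne_zero ?_ hTz (congrFun hG0 z)
    exact Finset.prod_ne_zero_iff.2 fun w hw ↦ sub_ne_zero.2 fun h ↦ hPz (h ▸ hw)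

lemma exists_le_of_limsup_div_lt {N : ℝ → ℝ} {d : ℝ}
    (h : limsup (fun r : ℝ ↦ ((N r / (π * r ^ 2) : ℝ) : EReal)) atTop < d) :
    ∃ R₀ > 0, ∀ s, R₀ ≤ s → N s ≤ π * d * s ^ 2 := by
  obtain ⟨R₁, hR₁⟩ := eventually_atTop.1 (eventually_lt_of_limsup_lt h)
  refine ⟨max R₁ 1, by positivity, fun s hs ↦ ?_⟩
  have hs0 : 0 < s := zero_lt_one.trans_le ((le_max_right _ _).trans hs)
  have hlt := EReal.coe_lt_coe_iff.1 (hR₁ s ((le_max_left _ _).trans hs))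
  rw [div_lt_iff₀ (by positivity)] at hlt
  linarith

/-- If {k_λ}_{λ∈Λ} is complete in the Fock space (Λ is a uniqueness set), then
D₊(Λ) ≥ 1/(3π). -/
theorem stmt17 (Λ : Set ℂ)
    (hfin : ∀ r : ℝ, (Λ ∩ Metric.ball 0 r).Finite)
    (hcomplete : ∀ G : ℂ → ℂ, MemFock G → (∀ l ∈ Λ, G l = 0) → G = 0) :
    ((1 / (3 * Real.pi) : ℝ) : EReal) ≤ Filter.limsup
      (fun r : ℝ =>
        (((Nat.card ↥(Λ ∩ Metric.ball 0 r) : ℝ) / (Real.pi * r ^ 2) : ℝ) : EReal))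
      Filter.atTop := by
  by_contra hlt
  obtain ⟨R₀, hR₀, hcount⟩ := exists_le_of_limsup_div_lt (not_le.1 hlt)
  have hd : π * (1 / (3 * π)) = 1 / 3 := by field_simp
  have hcount' : ∀ s, R₀ ≤ s → ((Λ ∩ Metric.ball 0 s).ncard : ℝ) ≤ 1 / 3 * s ^ 2 := fun s hs ↦ by
    simpa only [Nat.card_coe_set_eq, hd] using hcount s hs
  obtain ⟨G, hG, hGΛ, hG0⟩ :=
    exists_memFock_ne_zero_of_ncard_le hfin (by linarith [pi_gt_three]) hR₀ hcount'
  exact hG0 (hcomplete G hG hGΛ)
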